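/- Let ρ > 0 and let n ≥ 1 be a natural number. The function μ_Y(β) = (1/2)(1 − 2^{-n})·[(1 + tan²β)/tan β + ρ tan β], defined for β ∈ (0, π/2), attains its unique global minimum at β*_Y = arctan(1/√(1+ρ)), and the minimum value is (1 − 2^{-n})·√(1+ρ). In particular the minimizing angle does not depend on n. -/

import Mathlib

/-!
Writing `t = tan β`, the bracket is `(1 + t²)/t + ρ t = t⁻¹ + (1 + ρ) t`, and with `s = √(1 + ρ)`
one has `t⁻¹ + s² t - 2 s = (1 - s t)² / t`. So on `t > 0` the bracket is at least `2 s`, with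
equality exactly at `t = s⁻¹`; since `tan` is injective on `(0, π/2)`, this is the unique
minimiser `β = arctan (1/s)`. The prefactor `1 - 2^(-n)` is positive, so it scales the minimum
value without moving the minimiser.
-/

open Real

lemma one_add_sq_div_eq_inv_add (t : ℝ) : (1 + t ^ 2) / t = t⁻¹ + t := by
  rw [add_div, one_div, sq, mul_self_div_self]

lemma inv_add_mul_sub_two_sqrt {a t : ℝ} (ha : 0 ≤ a) (ht : t ≠ 0) :
    t⁻¹ + a * t - 2 * √a = (1 - √a * t) ^ 2 / t := by
  have hsq : √a ^ 2 = a := sq_sqrt ha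
  field_simp
  linear_combination (-t ^ 2) * hsq

lemma two_sqrt_lt_inv_add_mul {a t : ℝ} (ha : 0 ≤ a) (ht : 0 < t) (hne : t ≠ (√a)⁻¹) :
    2 * √a < t⁻¹ + a * t := by
  have hprod : √a * t ≠ 1 := fun h => hne (eq_inv_of_mul_eq_one_right h)
  have hgap : 0 < (1 - √a * t) ^ 2 / t :=
    div_pos (pow_two_pos_of_ne_zero (sub_ne_zero.mpr hprod.symm)) ht
  linarith [inv_add_mul_sub_two_sqrt ha ht.ne']

lemma inv_inv_sqrt_add_mul_inv_sqrt {a : ℝ} (ha : 0 < a) :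
    (√a)⁻¹⁻¹ + a * (√a)⁻¹ = 2 * √a := by
  have hs : √a ≠ 0 := (sqrt_pos.mpr ha).ne'
  rw [inv_inv]
  field_simp
  rw [sq_sqrt ha.le]
  ring

lemma one_sub_two_rpow_neg_pos {n : ℕ} (hn : 1 ≤ n) : 0 < 1 - (2 : ℝ) ^ (-(n : ℝ)) := by
  have hn' : (0 : ℝ) < n := by exact_mod_cast hn
  linarith [rpow_lt_one_of_one_lt_of_neg one_lt_two (neg_neg_of_pos hn')]

lemma arctan_mem_Ioo_of_pos {x : ℝ} (hx : 0 < x) : arctan x ∈ Set.Ioo 0 (π / 2) :=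
  ⟨arctan_pos.mpr hx, arctan_lt_pi_div_two x⟩

theorem substructure_complexity_n_yield_optimum (ρ : ℝ) (hρ : 0 < ρ)
    (n : ℕ) (hn : 1 ≤ n)
    (μY : ℝ → ℝ)
    (hμY : ∀ β, μY β = 1 / 2 * (1 - (2 : ℝ) ^ (-(n : ℝ))) *
        ((1 + Real.tan β ^ 2) / Real.tan β + ρ * Real.tan β))
    (βY : ℝ) (hβY : βY = Real.arctan (1 / Real.sqrt (1 + ρ))) :
    βY ∈ Set.Ioo 0 (π / 2) ∧
    (∀ β ∈ Set.Ioo 0 (π / 2), β ≠ βY → μY βY < μY β) ∧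
    μY βY = (1 - (2 : ℝ) ^ (-(n : ℝ))) * Real.sqrt (1 + ρ) := by
  have ha : 0 < 1 + ρ := by linarith
  have hc := one_sub_two_rpow_neg_pos hn
  have hμ : ∀ β, μY β = 1 / 2 * (1 - (2 : ℝ) ^ (-(n : ℝ))) *
      ((tan β)⁻¹ + (1 + ρ) * tan β) := fun β => by
    rw [hμY, one_add_sq_div_eq_inv_add]; ring
  rw [one_div] at hβY
  have hβY_mem : βY ∈ Set.Ioo 0 (π / 2) := hβY ▸ arctan_mem_Ioo_of_pos (by positivity)
  have htan : tan βY = (√(1 + ρ))⁻¹ := by rw [hβY, tan_arctan]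
  refine ⟨hβY_mem, fun β hβ hne => ?_, ?_⟩
  · have hpos : 0 < tan β := tan_pos_of_pos_of_lt_pi_div_two hβ.1 hβ.2
    have htne : tan β ≠ (√(1 + ρ))⁻¹ := fun h => hne <|
      injOn_tan ⟨by linarith [hβ.1, pi_pos], hβ.2⟩
        ⟨by linarith [hβY_mem.1, pi_pos], hβY_mem.2⟩ (h.trans htan.symm)
    rw [hμ, hμ, htan, inv_inv_sqrt_add_mul_inv_sqrt ha]
    gcongr
    exact two_sqrt_lt_inv_add_mul ha.le hpos htne
  · rw [hμ, htan, inv_inv_sqrt_add_mul_inv_sqrt ha]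
    ring
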